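/- arXiv:2311.11330 — 5 statements merged into one kernel-verified Lean document; each statement's English description precedes it below -/
import Mathlib

section
/- Let (a,b,c) ∈ ℝ³, γ ∈ ℝ∖{0}, U ⊆ ℂ open and f : U → ℝ smooth such that the curvature K of ds² = e^{−2f}|dz|² satisfies K(z) ≠ c for all z ∈ U. Set f̃ = f − (γ/2)·log|K−c|, so that |K−c|^γ·ds² = e^{−2f̃}|dz|², and let K̃ = e^{2f̃}·Δ₀f̃ be its curvature. Then ds² is a generalized Ricci metric of type (a,b,c) on U if and only if K̃ = |K−c|^{−γ}·((1 − γa/2)·K − γb/2) on U. -/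
open Filter Topology

/-- Euclidean Laplacian on `ℂ ≅ ℝ²`. -/
noncomputable def lap0 (g : ℂ → ℝ) (z : ℂ) : ℝ :=
  fderiv ℝ (fun w => fderiv ℝ g w 1) z 1 +
    fderiv ℝ (fun w => fderiv ℝ g w Complex.I) z Complex.I

/-- Squared Euclidean gradient norm on `ℂ ≅ ℝ²`. -/
noncomputable def grad0sq (g : ℂ → ℝ) (z : ℂ) : ℝ :=
  (fderiv ℝ g z 1) ^ 2 + (fderiv ℝ g z Complex.I) ^ 2

/-- Gaussian curvature of the conformal metric `e^{-2f}|dz|²`. -/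
noncomputable def curv (f : ℂ → ℝ) (z : ℂ) : ℝ :=
  Real.exp (2 * f z) * lap0 f z

/-- `e^{-2f}|dz|²` is a generalized Ricci metric of type `(a,b,c)` on `U`:
`(c-K)·ΔK + ‖∇K‖² + (aK+b)(K-c)² = 0`, where `Δ = e^{2f}Δ₀` and `‖∇·‖² = e^{2f}|∇₀·|²`. -/
def IsGenRicci (a b c : ℝ) (f : ℂ → ℝ) (U : Set ℂ) : Prop :=
  ∀ z ∈ U,
    (c - curv f z) * (Real.exp (2 * f z) * lap0 (curv f) z) +
      Real.exp (2 * f z) * grad0sq (curv f) z +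
      (a * curv f z + b) * (curv f z - c) ^ 2 = 0

lemma contDiffOn_dirDeriv {g : ℂ → ℝ} {U : Set ℂ} (hU : IsOpen U)
    (hg : ContDiffOn ℝ (⊤ : ℕ∞) g U) (v : ℂ) :
    ContDiffOn ℝ (⊤ : ℕ∞) (fun w => fderiv ℝ g w v) U := by
  have h := hg.fderiv_of_isOpen (m := (⊤ : ℕ∞)) hU (by simp)
  exact (ContinuousLinearMap.apply ℝ ℝ v).contDiff.comp_contDiffOn h

lemma contDiffOn_lap0 {g : ℂ → ℝ} {U : Set ℂ} (hU : IsOpen U)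
    (hg : ContDiffOn ℝ (⊤ : ℕ∞) g U) : ContDiffOn ℝ (⊤ : ℕ∞) (lap0 g) U :=
  (contDiffOn_dirDeriv hU (contDiffOn_dirDeriv hU hg 1) 1).add
    (contDiffOn_dirDeriv hU (contDiffOn_dirDeriv hU hg Complex.I) Complex.I)

lemma contDiffOn_curv {g : ℂ → ℝ} {U : Set ℂ} (hU : IsOpen U)
    (hg : ContDiffOn ℝ (⊤ : ℕ∞) g U) : ContDiffOn ℝ (⊤ : ℕ∞) (curv g) U :=
  (Real.contDiff_exp.comp_contDiffOn (contDiffOn_const.mul hg)).mul (contDiffOn_lap0 hU hg)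

lemma dir2 {U : Set ℂ} (hU : IsOpen U) {f K : ℂ → ℝ} {c γ : ℝ}
    (hf : ContDiffOn ℝ (⊤ : ℕ∞) f U) (hKs : ContDiffOn ℝ (⊤ : ℕ∞) K U)
    (hne : ∀ w ∈ U, K w ≠ c) {z : ℂ} (hz : z ∈ U) (v : ℂ) :
    fderiv ℝ (fun w => fderiv ℝ (fun w' => f w' - γ / 2 * Real.log (K w' - c)) w v) z v =
      fderiv ℝ (fun w => fderiv ℝ f w v) z v
        - γ / 2 * (fderiv ℝ (fun w => fderiv ℝ K w v) z v / (K z - c)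
            - (fderiv ℝ K z v) ^ 2 / (K z - c) ^ 2) := by
  have h1 : ∀ w ∈ U, fderiv ℝ (fun w' => f w' - γ / 2 * Real.log (K w' - c)) w v =
      fderiv ℝ f w v - γ / 2 * ((K w - c)⁻¹ * fderiv ℝ K w v) := by
    intro w hw
    have hfd : DifferentiableAt ℝ f w :=
      (hf.differentiableOn (by simp)).differentiableAt (hU.mem_nhds hw)
    have hKd : DifferentiableAt ℝ K w :=
      (hKs.differentiableOn (by simp)).differentiableAt (hU.mem_nhds hw)
    have hlog := ((hKd.hasFDerivAt.sub_const c).log (sub_ne_zero.2 (hne w hw)))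
    have htot := (hfd.hasFDerivAt.sub (hlog.const_mul (γ / 2)))
    rw [HasFDerivAt.fderiv (f := fun w' => f w' - γ / 2 * Real.log (K w' - c)) htot]
    simp [smul_eq_mul]
  have h2 : (fun w => fderiv ℝ (fun w' => f w' - γ / 2 * Real.log (K w' - c)) w v) =ᶠ[𝓝 z]
      (fun w => fderiv ℝ f w v - γ / 2 * ((K w - c)⁻¹ * fderiv ℝ K w v)) := by
    filter_upwards [hU.mem_nhds hz] with w hw using h1 w hw
  rw [h2.fderiv_eq]
  have hA : DifferentiableAt ℝ (fun w => fderiv ℝ f w v) z :=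
    ((contDiffOn_dirDeriv hU hf v).differentiableOn (by simp)).differentiableAt (hU.mem_nhds hz)
  have hB : DifferentiableAt ℝ (fun w => fderiv ℝ K w v) z :=
    ((contDiffOn_dirDeriv hU hKs v).differentiableOn (by simp)).differentiableAt (hU.mem_nhds hz)
  have hKd : DifferentiableAt ℝ K z :=
    (hKs.differentiableOn (by simp)).differentiableAt (hU.mem_nhds hz)
  have hd : K z - c ≠ 0 := sub_ne_zero.2 (hne z hz)
  have hinv := (hasFDerivAt_inv hd).comp z (hKd.hasFDerivAt.sub_const c)
  simp only [Function.comp_def] at hinv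
  have hmul := hinv.mul hB.hasFDerivAt
  have htot := hA.hasFDerivAt.sub (hmul.const_mul (γ / 2))
  rw [HasFDerivAt.fderiv (f := fun w => fderiv ℝ f w v - γ / 2 * ((K w - c)⁻¹ * fderiv ℝ K w v)) htot]
  simp [smul_eq_mul]
  field_simp
  ring

lemma curv_sub_log {U : Set ℂ} (hU : IsOpen U) {f : ℂ → ℝ} {c γ : ℝ}
    (hf : ContDiffOn ℝ (⊤ : ℕ∞) f U) (hK : ∀ w ∈ U, curv f w ≠ c) {z : ℂ} (hz : z ∈ U) :
    curv (fun w => f w - γ / 2 * Real.log |curv f w - c|) z =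
      Real.exp (2 * f z) * |curv f z - c| ^ (-γ) *
        (lap0 f z - γ / 2 * (lap0 (curv f) z / (curv f z - c)
          - grad0sq (curv f) z / (curv f z - c) ^ 2)) := by
  have hKs := contDiffOn_curv hU hf
  have habs : (fun w => f w - γ / 2 * Real.log |curv f w - c|) =
      fun w => f w - γ / 2 * Real.log (curv f w - c) := by
    funext w; rw [Real.log_abs]
  rw [habs]
  have hpos : 0 < |curv f z - c| := abs_pos.2 (sub_ne_zero.2 (hK z hz))
  have hlap : lap0 (fun w => f w - γ / 2 * Real.log (curv f w - c)) z =
      lap0 f z - γ / 2 * (lap0 (curv f) z / (curv f z - c)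
        - grad0sq (curv f) z / (curv f z - c) ^ 2) := by
    simp only [lap0, grad0sq]
    rw [dir2 hU hf hKs hK hz 1, dir2 hU hf hKs hK hz Complex.I]
    ring
  have hexp : Real.exp (2 * (f z - γ / 2 * Real.log (curv f z - c)))
      = Real.exp (2 * f z) * |curv f z - c| ^ (-γ) := by
    conv_lhs => rw [← Real.log_abs]
    rw [Real.rpow_def_of_pos hpos, ← Real.exp_add]
    congr 1
    ring
  rw [show curv (fun w => f w - γ / 2 * Real.log (curv f w - c)) z =
      Real.exp (2 * (f z - γ / 2 * Real.log (curv f z - c))) *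
        lap0 (fun w => f w - γ / 2 * Real.log (curv f w - c)) z from rfl]
  rw [hlap, hexp]

lemma algebra_iff {a b c γ E l L G P K : ℝ} (hγ : γ ≠ 0) (hd : K - c ≠ 0) (hP : P ≠ 0)
    (hEK : E * l = K) :
    ((c - K) * (E * L) + E * G + (a * K + b) * (K - c) ^ 2 = 0) ↔
      (E * P * (l - γ / 2 * (L / (K - c) - G / (K - c) ^ 2)) =
        P * ((1 - γ * a / 2) * K - γ * b / 2)) := by
  have gen : ∀ X : ℝ, (E * P * (l - γ / 2 * X) = P * ((1 - γ * a / 2) * K - γ * b / 2)) ↔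
      E * X = a * K + b := by
    intro X
    constructor
    · intro h0
      have h1 : P * (K - γ / 2 * (E * X)) = P * (K - γ / 2 * (a * K + b)) := by
        calc P * (K - γ / 2 * (E * X)) = E * P * (l - γ / 2 * X) := by rw [← hEK]; ring
        _ = P * ((1 - γ * a / 2) * K - γ * b / 2) := h0
        _ = P * (K - γ / 2 * (a * K + b)) := by ring
      have h2 := mul_left_cancel₀ hP h1
      have h3 : γ / 2 * (E * X) = γ / 2 * (a * K + b) := by linarith
      exact mul_left_cancel₀ (div_ne_zero hγ two_ne_zero) h3
    · intro h0
      calc E * P * (l - γ / 2 * X) = P * (E * l - γ / 2 * (E * X)) := by ring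
      _ = P * ((1 - γ * a / 2) * K - γ * b / 2) := by rw [hEK, h0]; ring
  have key : (c - K) * (E * L) + E * G + (a * K + b) * (K - c) ^ 2 =
      ((a * K + b) - E * (L / (K - c) - G / (K - c) ^ 2)) * (K - c) ^ 2 := by
    field_simp
    ring
  rw [gen (L / (K - c) - G / (K - c) ^ 2)]
  constructor
  · intro h0
    have h1 := (mul_eq_zero.1 (key ▸ h0)).resolve_right (pow_ne_zero 2 hd)
    linarith
  · intro h0
    rw [key, h0]
    ring

theorem stmt4 (a b c γ : ℝ) (hγ : γ ≠ 0) (U : Set ℂ) (hU : IsOpen U)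
    (f : ℂ → ℝ) (hf : ContDiffOn ℝ (⊤ : ℕ∞) f U) (hK : ∀ z ∈ U, curv f z ≠ c) :
    IsGenRicci a b c f U ↔
      ∀ z ∈ U,
        curv (fun w => f w - (γ / 2) * Real.log |curv f w - c|) z =
          |curv f z - c| ^ (-γ) * ((1 - γ * a / 2) * curv f z - γ * b / 2) := by
  unfold IsGenRicci
  refine forall₂_congr fun z hz => ?_
  rw [curv_sub_log hU hf hK hz]
  have hd : curv f z - c ≠ 0 := sub_ne_zero.2 (hK z hz)
  have hP : |curv f z - c| ^ (-γ) ≠ 0 :=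
    (Real.rpow_pos_of_pos (abs_pos.2 hd) _).ne'
  exact algebra_iff hγ hd hP rfl
end

section
/- Let a ∈ ℝ and γ ∈ ℝ∖{1} with γa ≠ 2. Let ds² = e^{−2f}|dz|² be a generalized Ricci metric of type (a,0,0) on an open set U ⊆ ℂ, and let U* = {z ∈ U : K(z) ≠ 0}. Then on U* the metric |K|^γ·ds² = e^{−2f̃}|dz|², where f̃ = f − (γ/2)·log|K|, is a generalized Ricci metric of type (2a(1−γ)/(2−γa), 0, 0), and its curvature is K̃ = (1 − γa/2)·|K|^{−γ}·K. -/
open Filter Topology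

lemma lap0_congr {g h : ℂ → ℝ} {z : ℂ} (he : g =ᶠ[𝓝 z] h) : lap0 g z = lap0 h z := by
  have h2 : ∀ v : ℂ, fderiv ℝ (fun w => fderiv ℝ g w v) z
      = fderiv ℝ (fun w => fderiv ℝ h w v) z := by
    intro v
    have h1 : (fun w => fderiv ℝ g w v) =ᶠ[𝓝 z] (fun w => fderiv ℝ h w v) := by
      filter_upwards [eventually_eventuallyEq_nhds.2 he] with w hw
      rw [hw.fderiv_eq]
    exact h1.fderiv_eq
  simp only [lap0, h2]

lemma grad0sq_congr {g h : ℂ → ℝ} {z : ℂ} (he : g =ᶠ[𝓝 z] h) : grad0sq g z = grad0sq h z := by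
  simp only [grad0sq, he.fderiv_eq]

lemma dd_hasFDerivAt {g : ℂ → ℝ} {U : Set ℂ} (hU : IsOpen U) (hg : ContDiffOn ℝ (⊤ : ℕ∞) g U)
    (v : ℂ) {z : ℂ} (hz : z ∈ U) :
    HasFDerivAt (fun w => fderiv ℝ g w v) (fderiv ℝ (fun w => fderiv ℝ g w v) z) z := by
  have h1 : ContDiffOn ℝ (⊤ : ℕ∞) (fun w => fderiv ℝ g w v) U :=
    (hg.fderiv_of_isOpen hU (by simp)).clm_apply contDiffOn_const
  exact ((h1.contDiffAt (hU.mem_nhds hz)).differentiableAt (by simp)).hasFDerivAt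

lemma curv_contDiffOn {f : ℂ → ℝ} {U : Set ℂ} (hU : IsOpen U) (hf : ContDiffOn ℝ (⊤ : ℕ∞) f U) :
    ContDiffOn ℝ (⊤ : ℕ∞) (curv f) U := by
  have h1 : ContDiffOn ℝ (⊤ : ℕ∞) (fderiv ℝ f) U := hf.fderiv_of_isOpen hU (by simp)
  have hdd : ∀ v : ℂ, ContDiffOn ℝ (⊤ : ℕ∞) (fun w => fderiv ℝ f w v) U :=
    fun v => h1.clm_apply contDiffOn_const
  have hdd2 : ∀ v : ℂ, ContDiffOn ℝ (⊤ : ℕ∞) (fun z => fderiv ℝ (fun w => fderiv ℝ f w v) z v) U :=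
    fun v => (((hdd v).fderiv_of_isOpen hU (by simp)).clm_apply contDiffOn_const)
  have hl : ContDiffOn ℝ (⊤ : ℕ∞) (lap0 f) U := by
    have := (hdd2 1).add (hdd2 Complex.I)
    exact this
  have he : ContDiffOn ℝ (⊤ : ℕ∞) (fun z => Real.exp (2 * f z)) U :=
    Real.contDiff_exp.comp_contDiffOn (contDiffOn_const.mul hf)
  exact he.mul hl

theorem stmt7 (a γ : ℝ) (hγ : γ ≠ 1) (hγa : γ * a ≠ 2) (U : Set ℂ)
    (hU : IsOpen U) (f : ℂ → ℝ) (hf : ContDiffOn ℝ (⊤ : ℕ∞) f U)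
    (hR : IsGenRicci a 0 0 f U) :
    IsGenRicci (2 * a * (1 - γ) / (2 - γ * a)) 0 0
        (fun w => f w - (γ / 2) * Real.log |curv f w|) {z ∈ U | curv f z ≠ 0} ∧
      ∀ z ∈ {z ∈ U | curv f z ≠ 0},
        curv (fun w => f w - (γ / 2) * Real.log |curv f w|) z =
          (1 - γ * a / 2) * |curv f z| ^ (-γ) * curv f z := by
  have h2γa : (2 : ℝ) - γ * a ≠ 0 := sub_ne_zero.mpr (Ne.symm hγa)
  set K : ℂ → ℝ := curv f with hKdef
  have hfun : (fun w => f w - (γ / 2) * Real.log |K w|)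
      = (fun w => f w - γ / 2 * Real.log (K w)) := by
    funext w; rw [Real.log_abs]
  rw [hfun]
  set ft : ℂ → ℝ := fun w => f w - γ / 2 * Real.log (K w) with hft
  set W : Set ℂ := {z ∈ U | K z ≠ 0} with hWdef
  set c₀ : ℝ := 1 - γ * a / 2 with hc₀
  have hKc : ContDiffOn ℝ (⊤ : ℕ∞) K U := curv_contDiffOn hU hf
  have hWopen : IsOpen W := by
    have h := hKc.continuousOn.isOpen_inter_preimage hU (isOpen_compl_singleton (x := (0:ℝ)))
    have : W = U ∩ K ⁻¹' {(0:ℝ)}ᶜ := by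
      ext w; simp [hWdef]
    rw [this]; exact h
  have hKd : ∀ w ∈ U, HasFDerivAt K (fderiv ℝ K w) w := fun w hw =>
    ((hKc.contDiffAt (hU.mem_nhds hw)).differentiableAt (by simp)).hasFDerivAt
  have hfd : ∀ w ∈ U, HasFDerivAt f (fderiv ℝ f w) w := fun w hw =>
    ((hf.contDiffAt (hU.mem_nhds hw)).differentiableAt (by simp)).hasFDerivAt
  -- curvature relation at points of U
  have hKval : ∀ w : ℂ, K w = Real.exp (2 * f w) * lap0 f w := fun w => rfl
  -- derivative of ft on W
  have hftd : ∀ w ∈ W, HasFDerivAt ft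
      (fderiv ℝ f w - (γ / 2) • ((K w)⁻¹ • fderiv ℝ K w)) w := fun w hw =>
    (hfd w hw.1).sub (((hKd w hw.1).log hw.2).const_mul (γ / 2))
  -- claim 2 (with exp form)
  have claim2 : ∀ z ∈ W, curv ft z = c₀ * Real.exp (-γ * Real.log (K z)) * K z := by
    intro z hz
    obtain ⟨hzU, hk⟩ := hz
    have hfteq : ∀ v : ℂ, (fun w => fderiv ℝ ft w v) =ᶠ[𝓝 z]
        (fun w => fderiv ℝ f w v - γ / 2 * ((K w)⁻¹ * fderiv ℝ K w v)) := by
      intro v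
      filter_upwards [hWopen.mem_nhds ⟨hzU, hk⟩] with w hw
      rw [(hftd w hw).fderiv]
      simp [ContinuousLinearMap.sub_apply, ContinuousLinearMap.smul_apply, smul_eq_mul]
    have hsecond : ∀ v : ℂ, fderiv ℝ (fun w => fderiv ℝ ft w v) z v
        = fderiv ℝ (fun w => fderiv ℝ f w v) z v
          - γ / 2 * ((K z)⁻¹ * fderiv ℝ (fun w => fderiv ℝ K w v) z v
            - (K z ^ 2)⁻¹ * (fderiv ℝ K z v) ^ 2) := by
      intro v
      rw [(hfteq v).fderiv_eq]
      have hA := dd_hasFDerivAt hU hf v hzU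
      have hC := dd_hasFDerivAt hU hKc v hzU
      have hB : HasFDerivAt (fun w => (K w)⁻¹) ((-(K z ^ 2)⁻¹) • fderiv ℝ K z) z := by
        have := (hasDerivAt_inv hk).comp_hasFDerivAt z (hKd z hzU)
        exact this
      have hfull := hA.sub ((hB.mul hC).const_mul (γ / 2))
      rw [show fderiv ℝ (fun w => fderiv ℝ f w v - γ / 2 * ((K w)⁻¹ * fderiv ℝ K w v)) z = _
        from hfull.fderiv]
      simp only [ContinuousLinearMap.sub_apply, ContinuousLinearMap.smul_apply,
        ContinuousLinearMap.add_apply, smul_eq_mul]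
      ring
    have hlapft : lap0 ft z = lap0 f z
        - γ / 2 * ((K z)⁻¹ * lap0 K z - (K z ^ 2)⁻¹ * grad0sq K z) := by
      simp only [lap0, grad0sq, hsecond 1, hsecond Complex.I]
      ring
    have hexp : Real.exp (2 * f z) ≠ 0 := Real.exp_ne_zero _
    have hRz := hR z hzU
    have hcomb : Real.exp (2 * f z) * ((K z)⁻¹ * lap0 K z - (K z ^ 2)⁻¹ * grad0sq K z)
        = a * K z := by
      have h1 : (0 - K z) * (Real.exp (2 * f z) * lap0 K z)
          + Real.exp (2 * f z) * grad0sq K z + (a * K z + 0) * (K z - 0) ^ 2 = 0 := hRz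
      field_simp
      linear_combination (-1) * h1
    have h2ft : (2 : ℝ) * ft z = 2 * f z + (-γ * Real.log (K z)) := by
      simp only [hft]; ring
    have hlapfz : Real.exp (2 * f z) * lap0 f z = K z := rfl
    show Real.exp (2 * ft z) * lap0 ft z = _
    rw [h2ft, Real.exp_add, hlapft]
    have : Real.exp (2 * f z) * (lap0 f z
        - γ / 2 * ((K z)⁻¹ * lap0 K z - (K z ^ 2)⁻¹ * grad0sq K z))
        = K z - γ / 2 * (a * K z) := by
      rw [mul_sub, hlapfz, ← mul_assoc, mul_comm (Real.exp (2 * f z)) (γ/2), mul_assoc, hcomb]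
    calc Real.exp (2 * f z) * Real.exp (-γ * Real.log (K z)) * (lap0 f z
          - γ / 2 * ((K z)⁻¹ * lap0 K z - (K z ^ 2)⁻¹ * grad0sq K z))
        = Real.exp (-γ * Real.log (K z)) * (Real.exp (2 * f z) * (lap0 f z
          - γ / 2 * ((K z)⁻¹ * lap0 K z - (K z ^ 2)⁻¹ * grad0sq K z))) := by ring
      _ = Real.exp (-γ * Real.log (K z)) * (K z - γ / 2 * (a * K z)) := by rw [this]
      _ = c₀ * Real.exp (-γ * Real.log (K z)) * K z := by rw [hc₀]; ring
  -- part 1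
  have part1 : IsGenRicci (2 * a * (1 - γ) / (2 - γ * a)) 0 0 ft W := by
    intro z hz
    obtain ⟨hzU, hk⟩ := hz
    set F : ℂ → ℝ := fun w => c₀ * Real.exp (-γ * Real.log (K w)) * K w with hF
    have hcurvF : curv ft =ᶠ[𝓝 z] F :=
      eventuallyEq_of_mem (hWopen.mem_nhds ⟨hzU, hk⟩) (fun w hw => claim2 w hw)
    -- derivative of F on W
    have hFd : ∀ w ∈ W, HasFDerivAt F
        ((c₀ * Real.exp (-γ * Real.log (K w))) • fderiv ℝ K w
          + K w • (c₀ • (Real.exp (-γ * Real.log (K w)) • ((-γ) • ((K w)⁻¹ • fderiv ℝ K w))))) w := by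
      intro w hw
      exact ((((hKd w hw.1).log hw.2).const_mul (-γ)).exp.const_mul c₀).mul (hKd w hw.1)
    have hFdv : ∀ w ∈ W, ∀ v : ℂ, fderiv ℝ F w v
        = c₀ * (1 - γ) * Real.exp (-γ * Real.log (K w)) * fderiv ℝ K w v := by
      intro w hw v
      rw [(hFd w hw).fderiv]
      simp only [ContinuousLinearMap.add_apply, ContinuousLinearMap.smul_apply, smul_eq_mul]
      field_simp [hw.2]
      ring
    have hgradF : grad0sq F z
        = (c₀ * (1 - γ) * Real.exp (-γ * Real.log (K z))) ^ 2 * grad0sq K z := by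
      simp only [grad0sq, hFdv z ⟨hzU, hk⟩ 1, hFdv z ⟨hzU, hk⟩ Complex.I]
      ring
    have hFsec : ∀ v : ℂ, fderiv ℝ (fun w => fderiv ℝ F w v) z v
        = c₀ * (1 - γ) * Real.exp (-γ * Real.log (K z))
            * fderiv ℝ (fun w => fderiv ℝ K w v) z v
          + (fderiv ℝ K z v) * (c₀ * (1 - γ)
            * (Real.exp (-γ * Real.log (K z)) * (-γ * ((K z)⁻¹ * fderiv ℝ K z v)))) := by
      intro v
      have heq : (fun w => fderiv ℝ F w v) =ᶠ[𝓝 z]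
          (fun w => c₀ * (1 - γ) * Real.exp (-γ * Real.log (K w)) * fderiv ℝ K w v) := by
        filter_upwards [hWopen.mem_nhds ⟨hzU, hk⟩] with w hw
        exact hFdv w hw v
      rw [heq.fderiv_eq]
      have hC := dd_hasFDerivAt hU hKc v hzU
      have hE : HasFDerivAt (fun w => c₀ * (1 - γ) * Real.exp (-γ * Real.log (K w)))
          ((c₀ * (1 - γ)) • (Real.exp (-γ * Real.log (K z))
            • ((-γ) • ((K z)⁻¹ • fderiv ℝ K z)))) z :=
        (((hKd z hzU).log hk).const_mul (-γ)).exp.const_mul (c₀ * (1 - γ))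
      have hfull := hE.mul hC
      rw [show fderiv ℝ (fun w => c₀ * (1 - γ) * Real.exp (-γ * Real.log (K w)) * fderiv ℝ K w v) z
        = _ from hfull.fderiv]
      simp only [ContinuousLinearMap.add_apply, ContinuousLinearMap.smul_apply, smul_eq_mul]
    have hlapF : lap0 F z = c₀ * (1 - γ) * Real.exp (-γ * Real.log (K z))
        * (lap0 K z - γ * (K z)⁻¹ * grad0sq K z) := by
      simp only [lap0, grad0sq, hFsec 1, hFsec Complex.I]
      ring
    -- assemble the equation
    have hRz : (0 - K z) * (Real.exp (2 * f z) * lap0 K z)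
        + Real.exp (2 * f z) * grad0sq K z + (a * K z + 0) * (K z - 0) ^ 2 = 0 := hR z hzU
    have h2ft : (2 : ℝ) * ft z = 2 * f z + (-γ * Real.log (K z)) := by
      simp only [hft]; ring
    have hlap0cf : lap0 (curv ft) z = lap0 F z := lap0_congr hcurvF
    have hgrad0cf : grad0sq (curv ft) z = grad0sq F z := grad0sq_congr hcurvF
    have hcv : curv ft z = c₀ * Real.exp (-γ * Real.log (K z)) * K z := claim2 z ⟨hzU, hk⟩
    rw [hcv, h2ft, Real.exp_add, hlap0cf, hgrad0cf, hlapF, hgradF]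
    field_simp
    linear_combination (c₀ ^ 2 * Real.exp (-(γ * Real.log (K z))) ^ 3 * (1 - γ) * K z * (2 - γ * a)) * hRz
      + (2 * a * (1 - γ) * c₀ ^ 2 * Real.exp (-(γ * Real.log (K z))) ^ 3 * K z ^ 4) * hc₀
  refine ⟨part1, ?_⟩
  intro z hz
  have h2 := claim2 z hz
  have habs : |K z| ^ (-γ) = Real.exp (-γ * Real.log (K z)) := by
    rw [Real.rpow_def_of_pos (abs_pos.2 hz.2), Real.log_abs, mul_comm]
  rw [h2, habs]
end

section
/- Let a ∈ (0,2)∪(2,∞), m a positive integer, and U ⊆ ℂ open with 0 ∈ U. Let v : U → ℝ be smooth with −Δ₀v = (a/2 − 1)·e^{2v}·|z|^{2m} on U∖{0} (so e^{2v}|z|^{2m}|dz|² has constant curvature a/2 − 1 on U∖{0}, with a conical singularity of order m at 0), and let u : U → ℝ be smooth and harmonic on U∖{0} (so e^{2u}|z|^{4m/a}|dz|² is flat on U∖{0}). Then the function w = (2v − au)/(2 − a) is smooth on U, the metric ds² = e^{2w}|dz|² (which on U∖{0} equals V^{2/(2−a)}·e^{2u}|z|^{4m/a}|dz|² with V = e^{2v−2u}|z|^{2m(1−2/a)})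 is a generalized Ricci metric of type (a,0,0) on U, and its curvature K = −V^{a/(a−2)} satisfies: K < 0 on U∖{0}, K(0) = 0, and |K(z)|/|z|^{2m} extends to a positive continuous function at 0 (i.e., √|K| has a zero of order exactly m at 0). -/
open Filter Topology

/-! ### Auxiliary calculus lemmas -/

lemma diffAt_of_cd {g : ℂ → ℝ} {U : Set ℂ} (hU : IsOpen U) (hg : ContDiffOn ℝ (⊤ : ℕ∞) g U)
    {z : ℂ} (hz : z ∈ U) : DifferentiableAt ℝ g z :=
  (hg.contDiffAt (hU.mem_nhds hz)).differentiableAt (by simp)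

lemma hasFDerivAt_pd {g : ℂ → ℝ} {U : Set ℂ} (hU : IsOpen U) (hg : ContDiffOn ℝ (⊤ : ℕ∞) g U)
    {z : ℂ} (hz : z ∈ U) (e : ℂ) :
    HasFDerivAt (fun w => fderiv ℝ g w e)
      ((ContinuousLinearMap.apply ℝ ℝ e).comp (fderiv ℝ (fderiv ℝ g) z)) z := by
  have h1 : ContDiffOn ℝ (⊤ : ℕ∞) (fderiv ℝ g) U := hg.fderiv_of_isOpen hU (by simp)
  have h2 : DifferentiableAt ℝ (fderiv ℝ g) z :=
    (h1.contDiffAt (hU.mem_nhds hz)).differentiableAt (by simp)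
  exact ((ContinuousLinearMap.apply ℝ ℝ e).hasFDerivAt).comp z h2.hasFDerivAt

lemma pd_comb {p g : ℂ → ℝ} {U : Set ℂ} (hU : IsOpen U) (hp : ContDiffOn ℝ (⊤ : ℕ∞) p U)
    (hg : ContDiffOn ℝ (⊤ : ℕ∞) g U) (c₁ c₂ : ℝ) {z : ℂ} (hz : z ∈ U) (e : ℂ) :
    fderiv ℝ (fun w => c₁ * p w + c₂ * g w) z e = c₁ * fderiv ℝ p z e + c₂ * fderiv ℝ g z e := by
  have h := (((diffAt_of_cd hU hp hz).hasFDerivAt.const_mul c₁).add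
    ((diffAt_of_cd hU hg hz).hasFDerivAt.const_mul c₂))
  rw [HasFDerivAt.fderiv (f := fun w => c₁ * p w + c₂ * g w) h]
  simp [smul_eq_mul]

lemma lap0_comb {p g : ℂ → ℝ} {U : Set ℂ} (hU : IsOpen U) (hp : ContDiffOn ℝ (⊤ : ℕ∞) p U)
    (hg : ContDiffOn ℝ (⊤ : ℕ∞) g U) (c₁ c₂ : ℝ) {z : ℂ} (hz : z ∈ U) :
    lap0 (fun w => c₁ * p w + c₂ * g w) z = c₁ * lap0 p z + c₂ * lap0 g z := by
  have key : ∀ e : ℂ, fderiv ℝ (fun w => fderiv ℝ (fun w => c₁ * p w + c₂ * g w) w e) z e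
      = c₁ * fderiv ℝ (fun w => fderiv ℝ p w e) z e
        + c₂ * fderiv ℝ (fun w => fderiv ℝ g w e) z e := by
    intro e
    have heq : (fun w => fderiv ℝ (fun w => c₁ * p w + c₂ * g w) w e)
        =ᶠ[𝓝 z] (fun w => c₁ * fderiv ℝ p w e + c₂ * fderiv ℝ g w e) :=
      Filter.eventually_of_mem (hU.mem_nhds hz) (fun w hw => pd_comb hU hp hg c₁ c₂ hw e)
    rw [Filter.EventuallyEq.fderiv_eq heq]
    have h := (((hasFDerivAt_pd hU hp hz e).const_mul c₁).add
      ((hasFDerivAt_pd hU hg hz e).const_mul c₂))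
    rw [HasFDerivAt.fderiv (f := fun w => c₁ * fderiv ℝ p w e + c₂ * fderiv ℝ g w e) h,
      (hasFDerivAt_pd hU hp hz e).fderiv, (hasFDerivAt_pd hU hg hz e).fderiv]
    simp [smul_eq_mul]
  unfold lap0
  rw [key 1, key Complex.I]
  ring

lemma lap0_eq_D2 {g : ℂ → ℝ} {U : Set ℂ} (hU : IsOpen U) (hg : ContDiffOn ℝ (⊤ : ℕ∞) g U)
    {z : ℂ} (hz : z ∈ U) :
    lap0 g z = fderiv ℝ (fderiv ℝ g) z 1 1
      + fderiv ℝ (fderiv ℝ g) z Complex.I Complex.I := by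
  unfold lap0
  rw [(hasFDerivAt_pd hU hg hz 1).fderiv, (hasFDerivAt_pd hU hg hz Complex.I).fderiv]
  simp

lemma hasFDerivAt_nn (z : ℂ) :
    HasFDerivAt (fun w : ℂ => w.re ^ 2 + w.im ^ 2)
      ((2*z.re) • Complex.reCLM + (2*z.im) • Complex.imCLM) z := by
  have h1 : HasFDerivAt (fun w : ℂ => w.re) Complex.reCLM z := Complex.reCLM.hasFDerivAt
  have h2 : HasFDerivAt (fun w : ℂ => w.im) Complex.imCLM z := Complex.imCLM.hasFDerivAt
  have h3 := ((hasDerivAt_pow 2 z.re).comp_hasFDerivAt z h1).add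
    ((hasDerivAt_pow 2 z.im).comp_hasFDerivAt z h2)
  refine h3.congr_fderiv ?_
  · norm_num

lemma hasFDerivAt_q (m : ℕ) (z : ℂ) :
    HasFDerivAt (fun w : ℂ => (w.re ^ 2 + w.im ^ 2) ^ m)
      (((m : ℝ) * (z.re ^ 2 + z.im ^ 2) ^ (m-1)) •
        ((2*z.re) • Complex.reCLM + (2*z.im) • Complex.imCLM)) z :=
  (hasDerivAt_pow m (z.re ^ 2 + z.im ^ 2)).comp_hasFDerivAt z (hasFDerivAt_nn z)

lemma hasFDerivAt_F {H : ℂ → ℝ} {z : ℂ} (hH : DifferentiableAt ℝ H z) (m : ℕ) :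
    HasFDerivAt (fun w => -(Real.exp (H w) * (w.re ^ 2 + w.im ^ 2) ^ m))
      (-(Real.exp (H z) • (((m : ℝ) * (z.re ^ 2 + z.im ^ 2) ^ (m-1)) •
          ((2*z.re) • Complex.reCLM + (2*z.im) • Complex.imCLM))
        + ((z.re ^ 2 + z.im ^ 2) ^ m) • (Real.exp (H z) • fderiv ℝ H z))) z :=
  (hH.hasFDerivAt.exp.mul (hasFDerivAt_q m z)).neg

lemma fderiv_F_apply {H : ℂ → ℝ} {z : ℂ} (hH : DifferentiableAt ℝ H z) (m : ℕ) (e : ℂ) :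
    fderiv ℝ (fun w => -(Real.exp (H w) * (w.re ^ 2 + w.im ^ 2) ^ m)) z e
      = -(Real.exp (H z) * ((z.re ^ 2 + z.im ^ 2) ^ m * fderiv ℝ H z e
          + (m : ℝ) * (z.re ^ 2 + z.im ^ 2) ^ (m-1) * (2*z.re*e.re + 2*z.im*e.im))) := by
  rw [(hasFDerivAt_F hH m).fderiv]
  simp [ContinuousLinearMap.add_apply, ContinuousLinearMap.smul_apply, smul_eq_mul]
  ring

lemma pd_F_second {H : ℂ → ℝ} {U : Set ℂ} (hU : IsOpen U) (hH : ContDiffOn ℝ (⊤ : ℕ∞) H U)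
    (m : ℕ) {z : ℂ} (hz : z ∈ U) (e : ℂ) :
    fderiv ℝ (fun w => fderiv ℝ (fun w => -(Real.exp (H w) * (w.re ^ 2 + w.im ^ 2) ^ m)) w e) z e
      = -(Real.exp (H z) * ((z.re^2+z.im^2)^m * (fderiv ℝ (fderiv ℝ H) z e e)
           + fderiv ℝ H z e * ((m:ℝ)*(z.re^2+z.im^2)^(m-1)*(2*z.re*e.re+2*z.im*e.im))
           + ((m:ℝ)*(z.re^2+z.im^2)^(m-1)*(2*e.re*e.re+2*e.im*e.im)
              + (2*z.re*e.re+2*z.im*e.im)*((m:ℝ)*(((m-1:ℕ):ℝ)*(z.re^2+z.im^2)^(m-1-1))*(2*z.re*e.re+2*z.im*e.im))))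
         + ((z.re^2+z.im^2)^m * fderiv ℝ H z e + (m:ℝ)*(z.re^2+z.im^2)^(m-1)*(2*z.re*e.re+2*z.im*e.im))
             * (Real.exp (H z) * fderiv ℝ H z e)) := by
  have heq : (fun w => fderiv ℝ (fun w => -(Real.exp (H w) * (w.re ^ 2 + w.im ^ 2) ^ m)) w e)
      =ᶠ[𝓝 z] (fun w => -(Real.exp (H w) * ((w.re ^ 2 + w.im ^ 2) ^ m * fderiv ℝ H w e
          + (m : ℝ) * (w.re ^ 2 + w.im ^ 2) ^ (m-1) * (2*w.re*e.re + 2*w.im*e.im)))) :=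
    Filter.eventually_of_mem (hU.mem_nhds hz)
      (fun w hw => fderiv_F_apply (diffAt_of_cd hU hH hw) m e)
  rw [heq.fderiv_eq]
  have hA := (diffAt_of_cd hU hH hz).hasFDerivAt.exp
  have hq := hasFDerivAt_q m z
  have hhx := hasFDerivAt_pd hU hH hz e
  have hc : HasFDerivAt (fun w : ℂ => (m:ℝ) * (w.re ^ 2 + w.im ^ 2) ^ (m-1))
      ((m:ℝ) • (((m - 1 : ℕ):ℝ) * (z.re ^ 2 + z.im ^ 2) ^ (m - 1 - 1)) •
        ((2 * z.re) • Complex.reCLM + (2 * z.im) • Complex.imCLM)) z :=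
    ((hasDerivAt_pow (m-1) (z.re ^ 2 + z.im ^ 2)).comp_hasFDerivAt z
      (hasFDerivAt_nn z)).const_mul (m:ℝ)
  have hl : HasFDerivAt (fun w : ℂ => 2*w.re*e.re + 2*w.im*e.im)
      ((e.re • ((2:ℝ) • Complex.reCLM)) + (e.im • ((2:ℝ) • Complex.imCLM))) z := by
    have h1 : HasFDerivAt (fun w : ℂ => w.re) Complex.reCLM z := Complex.reCLM.hasFDerivAt
    have h2 : HasFDerivAt (fun w : ℂ => w.im) Complex.imCLM z := Complex.imCLM.hasFDerivAt
    exact ((h1.const_mul (2:ℝ)).mul_const e.re).add ((h2.const_mul (2:ℝ)).mul_const e.im)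
  have hB := (hq.mul hhx).add (hc.mul hl)
  have hφ := (hA.mul hB).neg
  rw [HasFDerivAt.fderiv (f := fun w => -(Real.exp (H w) * ((w.re ^ 2 + w.im ^ 2) ^ m * fderiv ℝ H w e
      + (m : ℝ) * (w.re ^ 2 + w.im ^ 2) ^ (m-1) * (2*w.re*e.re + 2*w.im*e.im)))) hφ]
  simp [ContinuousLinearMap.add_apply, ContinuousLinearMap.smul_apply,
    ContinuousLinearMap.comp_apply, ContinuousLinearMap.apply_apply, smul_eq_mul]
  ring

lemma ricci_algebra (a E2 Ev Nm A1 A2 N R Im X Y P Q2 mR K Lx Ly Fx Fy : ℝ)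
    (r1 : A1 * N = Nm)
    (r2 : (mR - 1) * A2 * N = (mR - 1) * A1)
    (r3 : R^2 + Im^2 = N)
    (r4 : P + Q2 = -(a * (Ev * Nm)))
    (hK : K = -(E2*Ev*Nm))
    (hFx : Fx = -(E2*Ev*(Nm*X + mR*A1*(2*R))))
    (hFy : Fy = -(E2*Ev*(Nm*Y + mR*A1*(2*Im))))
    (hLx : Lx = -(E2*Ev*(Nm*P + X*(mR*A1*(2*R)) + (mR*A1*2 + (2*R)*(mR*((mR-1)*A2)*(2*R)))))
      + -((Nm*X + mR*A1*(2*R))*(E2*Ev*X)))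
    (hLy : Ly = -(E2*Ev*(Nm*Q2 + Y*(mR*A1*(2*Im)) + (mR*A1*2 + (2*Im)*(mR*((mR-1)*A2)*(2*Im)))))
      + -((Nm*Y + mR*A1*(2*Im))*(E2*Ev*Y))) :
    (0 - K) * (E2 * (Lx + Ly)) + E2 * (Fx^2 + Fy^2) + (a*K + 0)*(K - 0)^2 = 0 := by
  subst hK hFx hFy hLx hLy
  linear_combination (E2*(E2*Ev)^2*(4*mR^2*A1^2 - 4*mR*(mR-1)*A2*Nm)) * r3
    + (E2*(E2*Ev)^2*4*mR^2*A1) * r1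
    + (-(E2*(E2*Ev)^2*4*mR*Nm)) * r2
    + (-(E2*(E2*Ev)^2*Nm^2)) * r4

lemma nn_pos {z : ℂ} (hz : z ≠ 0) : 0 < z.re ^ 2 + z.im ^ 2 := by
  have := Complex.normSq_pos.mpr hz
  rw [Complex.normSq_apply] at this
  nlinarith

lemma abs_pow_eq (m : ℕ) (z : ℂ) :
    ‖z‖ ^ (2*m) = (z.re ^ 2 + z.im ^ 2) ^ m := by
  rw [pow_mul, Complex.sq_norm]
  congr 1
  rw [Complex.normSq_apply]; ring
theorem stmt10 (a : ℝ) (ha : a ∈ Set.Ioo (0 : ℝ) 2 ∪ Set.Ioi (2 : ℝ))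
    (m : ℕ) (hm : 0 < m) (U : Set ℂ) (hU : IsOpen U) (h0 : (0 : ℂ) ∈ U)
    (v u : ℂ → ℝ) (hv : ContDiffOn ℝ (⊤ : ℕ∞) v U)
    (hvcc : ∀ z ∈ U \ {0}, -lap0 v z
      = (a / 2 - 1) * (Real.exp (2 * v z) * ‖z‖ ^ (2 * m)))
    (hu : ContDiffOn ℝ (⊤ : ℕ∞) u U) (huharm : ∀ z ∈ U \ {0}, lap0 u z = 0) :
    ContDiffOn ℝ (⊤ : ℕ∞) (fun z => (2 * v z - a * u z) / (2 - a)) U ∧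
    (∀ z ∈ U \ {0},
      Real.exp (2 * ((2 * v z - a * u z) / (2 - a))) =
        (Real.exp (2 * v z - 2 * u z) * ‖z‖ ^ (2 * (m : ℝ) * (1 - 2 / a)))
            ^ (2 / (2 - a))
          * (Real.exp (2 * u z) * ‖z‖ ^ (4 * (m : ℝ) / a))) ∧
    IsGenRicci a 0 0 (fun z => -((2 * v z - a * u z) / (2 - a))) U ∧
    (∀ z ∈ U \ {0},
      curv (fun z => -((2 * v z - a * u z) / (2 - a))) z =
        -(Real.exp (2 * v z - 2 * u z) * ‖z‖ ^ (2 * (m : ℝ) * (1 - 2 / a)))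
            ^ (a / (a - 2))) ∧
    (∀ z ∈ U \ {0}, curv (fun z => -((2 * v z - a * u z) / (2 - a))) z < 0) ∧
    curv (fun z => -((2 * v z - a * u z) / (2 - a))) 0 = 0 ∧
    ∃ L : ℝ, 0 < L ∧
      Filter.Tendsto
        (fun z => |curv (fun z => -((2 * v z - a * u z) / (2 - a))) z|
          / ‖z‖ ^ (2 * m))
        (𝓝[≠] (0 : ℂ)) (𝓝 L) := by
  have ha0 : 0 < a := by
    rcases ha with h | h
    · exact h.1
    · exact lt_trans two_pos h
  have hane2 : a ≠ 2 := by
    rcases ha with h | h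
    · exact ne_of_lt h.2
    · exact ne_of_gt h
  have h2a : (2:ℝ) - a ≠ 0 := fun hh => hane2 (by linarith)
  have ha2' : a - 2 ≠ 0 := sub_ne_zero.mpr hane2
  have haz : a ≠ 0 := ne_of_gt ha0
  set f : ℂ → ℝ := fun z => -((2 * v z - a * u z) / (2 - a)) with hfdef
  have hfc : ContDiffOn ℝ (⊤ : ℕ∞) f U := by
    rw [hfdef]
    exact (((contDiffOn_const.mul hv).sub (contDiffOn_const.mul hu)).div_const _).neg
  have hfeq : f = fun z => (a/(2-a)) * u z + (-(2/(2-a))) * v z := by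
    rw [hfdef]; funext z; field_simp; ring
  have hlapv : ∀ z ∈ U \ {0},
      lap0 v z = (1 - a/2) * (Real.exp (2 * v z) * (z.re ^ 2 + z.im ^ 2) ^ m) := by
    intro z hz
    have h1 := hvcc z hz
    rw [abs_pow_eq] at h1
    linarith
  have hlapf : ∀ z ∈ U \ {0},
      lap0 f z = -(Real.exp (2 * v z) * (z.re ^ 2 + z.im ^ 2) ^ m) := by
    intro z hz
    rw [hfeq, lap0_comb hU hu hv _ _ hz.1, huharm z hz, hlapv z hz]
    field_simp
    ring
  -- value of `lap0 f` at the origin via continuity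
  have hlapf0 : lap0 f 0 = 0 := by
    haveI : (𝓝[≠] (0:ℂ)).NeBot := Module.punctured_nhds_neBot ℝ ℂ 0
    set Nf : ℂ → ℝ := fun w => fderiv ℝ (fderiv ℝ f) w 1 1
      + fderiv ℝ (fderiv ℝ f) w Complex.I Complex.I with hNfdef
    have hNeq : ∀ w ∈ U, lap0 f w = Nf w := fun w hw => lap0_eq_D2 hU hfc hw
    have hNcont : ContinuousOn Nf U := by
      have h1 : ContDiffOn ℝ (⊤ : ℕ∞) (fderiv ℝ f) U := hfc.fderiv_of_isOpen hU (by simp)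
      have h2 : ContDiffOn ℝ (⊤ : ℕ∞) (fderiv ℝ (fderiv ℝ f)) U := h1.fderiv_of_isOpen hU (by simp)
      have h := h2.continuousOn
      exact ((h.clm_apply continuousOn_const).clm_apply continuousOn_const).add
        ((h.clm_apply continuousOn_const).clm_apply continuousOn_const)
    have t1 : Tendsto Nf (𝓝[≠](0:ℂ)) (𝓝 (Nf 0)) :=
      ((hNcont.continuousAt (hU.mem_nhds h0)).tendsto).mono_left nhdsWithin_le_nhds
    have t2 : Tendsto Nf (𝓝[≠](0:ℂ)) (𝓝 0) := by
      have hvc : ContinuousAt v 0 := hv.continuousOn.continuousAt (hU.mem_nhds h0)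
      have hGc : ContinuousAt (fun w : ℂ => -(Real.exp (2 * v w) * (w.re^2+w.im^2)^m)) 0 :=
        ((Real.continuous_exp.continuousAt.comp (continuousAt_const.mul hvc)).mul
          (((Complex.continuous_re.pow 2).add (Complex.continuous_im.pow 2)).pow m).continuousAt).neg
      have hG0 : -(Real.exp (2 * v (0:ℂ)) * ((0:ℂ).re^2+(0:ℂ).im^2)^m) = 0 := by
        simp [zero_pow hm.ne']
      have t3 : Tendsto (fun w : ℂ => -(Real.exp (2 * v w) * (w.re^2+w.im^2)^m))
          (𝓝[≠](0:ℂ)) (𝓝 0) := by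
        have := hGc.tendsto.mono_left (nhdsWithin_le_nhds (s := {(0:ℂ)}ᶜ))
        rwa [hG0] at this
      refine t3.congr' ?_
      filter_upwards [mem_nhdsWithin_of_mem_nhds (hU.mem_nhds h0), self_mem_nhdsWithin]
        with w hwU hw0
      rw [← hNeq w hwU, hlapf w ⟨hwU, hw0⟩]
    have hN0 : Nf 0 = 0 := tendsto_nhds_unique t1 t2
    rw [hNeq 0 h0, hN0]
  have hlapfU : ∀ w ∈ U, lap0 f w = -(Real.exp (2 * v w) * (w.re ^ 2 + w.im ^ 2) ^ m) := by
    intro w hw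
    by_cases hw0 : w = 0
    · subst hw0
      rw [hlapf0]
      simp [zero_pow hm.ne']
    · exact hlapf w ⟨hw, hw0⟩
  have hHc : ContDiffOn ℝ (⊤ : ℕ∞) (fun w => 2 * f w + 2 * v w) U :=
    (contDiffOn_const.mul hfc).add (contDiffOn_const.mul hv)
  have hHdiff : ∀ z ∈ U, DifferentiableAt ℝ (fun w => 2 * f w + 2 * v w) z :=
    fun z hz => diffAt_of_cd hU hHc hz
  have hlapH : ∀ z ∈ U \ {0}, lap0 (fun w => 2 * f w + 2 * v w) z
      = -(a * (Real.exp (2 * v z) * (z.re ^ 2 + z.im ^ 2) ^ m)) := by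
    intro z hz
    rw [lap0_comb hU hfc hv 2 2 hz.1, hlapf z hz, hlapv z hz]
    ring
  have hKF : ∀ w ∈ U, curv f w
      = -(Real.exp (2 * f w + 2 * v w) * (w.re ^ 2 + w.im ^ 2) ^ m) := by
    intro w hw
    unfold curv
    rw [hlapfU w hw, Real.exp_add]
    ring
  have hKFev : ∀ z ∈ U, curv f
      =ᶠ[𝓝 z] (fun w => -(Real.exp (2 * f w + 2 * v w) * (w.re ^ 2 + w.im ^ 2) ^ m)) :=
    fun z hz => Filter.eventually_of_mem (hU.mem_nhds hz) (fun w hw => hKF w hw)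
  refine ⟨?_, ?_, ?_, ?_, ?_, ?_, ?_⟩
  · -- smoothness
    exact ((contDiffOn_const.mul hv).sub (contDiffOn_const.mul hu)).div_const _
  · -- metric identity
    intro z hz
    have hz0 : z ≠ 0 := fun h => hz.2 (by simp [h])
    have hr : (0:ℝ) < ‖z‖ := norm_pos_iff.mpr hz0
    calc Real.exp (2 * ((2 * v z - a * u z) / (2 - a)))
        = Real.exp ((2*v z - 2*u z)*(2/(2-a)) + 2*u z)
            * ‖z‖ ^ ((2*(m:ℝ)*(1-2/a))*(2/(2-a)) + 4*(m:ℝ)/a) := by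
          rw [show (2*(m:ℝ)*(1-2/a))*(2/(2-a)) + 4*(m:ℝ)/a = 0 by field_simp; ring,
            Real.rpow_zero, mul_one]
          congr 1
          field_simp
          ring
      _ = (Real.exp (2 * v z - 2 * u z) * ‖z‖ ^ (2 * (m : ℝ) * (1 - 2 / a)))
            ^ (2 / (2 - a)) * (Real.exp (2 * u z) * ‖z‖ ^ (4 * (m : ℝ) / a)) := by
          rw [Real.exp_add, Real.rpow_add hr, Real.exp_mul,
            Real.rpow_mul (norm_nonneg z),
            Real.mul_rpow (Real.exp_pos _).le
              (Real.rpow_nonneg (norm_nonneg z) _)]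
          ring
  · -- generalized Ricci
    unfold IsGenRicci
    intro z hz
    by_cases hz0 : z = 0
    · subst hz0
      have hK0 : curv f 0 = 0 := by
        rw [hKF 0 h0]
        simp [zero_pow hm.ne']
      have hFx0 : ∀ e : ℂ, fderiv ℝ (curv f) 0 e = 0 := by
        intro e
        rw [(hKFev 0 h0).fderiv_eq, fderiv_F_apply (hHdiff 0 h0) m e]
        simp [zero_pow hm.ne']
      unfold grad0sq
      rw [hK0, hFx0 1, hFx0 Complex.I]
      ring
    · have hmem : z ∈ U \ {0} := ⟨hz, hz0⟩
      have e1 : ∀ w ∈ U, fderiv ℝ (curv f) w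
          = fderiv ℝ (fun w => -(Real.exp (2 * f w + 2 * v w) * (w.re ^ 2 + w.im ^ 2) ^ m)) w :=
        fun w hw => (hKFev w hw).fderiv_eq
      have e2 : ∀ e : ℂ, fderiv ℝ (fun w => fderiv ℝ (curv f) w e) z
          = fderiv ℝ (fun w => fderiv ℝ
              (fun w => -(Real.exp (2 * f w + 2 * v w) * (w.re ^ 2 + w.im ^ 2) ^ m)) w e) z := by
        intro e
        apply Filter.EventuallyEq.fderiv_eq
        filter_upwards [hU.mem_nhds hz] with w hw
        rw [e1 w hw]
      unfold lap0 grad0sq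
      refine ricci_algebra a (Real.exp (2 * f z)) (Real.exp (2 * v z))
        ((z.re^2+z.im^2)^m) ((z.re^2+z.im^2)^(m-1)) ((z.re^2+z.im^2)^(m-1-1))
        (z.re^2+z.im^2) z.re z.im
        (fderiv ℝ (fun w => 2 * f w + 2 * v w) z 1)
        (fderiv ℝ (fun w => 2 * f w + 2 * v w) z Complex.I)
        (fderiv ℝ (fderiv ℝ (fun w => 2 * f w + 2 * v w)) z 1 1)
        (fderiv ℝ (fderiv ℝ (fun w => 2 * f w + 2 * v w)) z Complex.I Complex.I)
        (m:ℝ) (curv f z) _ _ _ _ ?_ ?_ rfl ?_ ?_ ?_ ?_ ?_ ?_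
      · rw [← pow_succ]
        congr 1
        omega
      · rcases (show m = 1 ∨ 2 ≤ m by omega) with h | h
        · subst h; simp
        · rw [mul_assoc, ← pow_succ, show m - 1 - 1 + 1 = m - 1 by omega]
      · rw [← lap0_eq_D2 hU hHc hz]
        exact hlapH z hmem
      · rw [hKF z hz, Real.exp_add]
      · rw [e1 z hz, fderiv_F_apply (hHdiff z hz) m 1, Real.exp_add]
        simp only [Complex.one_re, Complex.one_im]
        ring
      · rw [e1 z hz, fderiv_F_apply (hHdiff z hz) m Complex.I, Real.exp_add]
        simp only [Complex.I_re, Complex.I_im]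
        ring
      · rw [e2 1, pd_F_second hU hHc m hz 1, Real.exp_add, Nat.cast_pred hm]
        simp only [Complex.one_re, Complex.one_im]
        ring
      · rw [e2 Complex.I, pd_F_second hU hHc m hz Complex.I, Real.exp_add, Nat.cast_pred hm]
        simp only [Complex.I_re, Complex.I_im]
        ring
  · -- curvature formula
    intro z hz
    have hz0 : z ≠ 0 := fun h => hz.2 (by simp [h])
    have hr : (0:ℝ) < ‖z‖ := norm_pos_iff.mpr hz0
    rw [hKF z hz.1, Real.mul_rpow (Real.exp_pos _).le
        (Real.rpow_nonneg (norm_nonneg z) _),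
      ← Real.exp_mul, ← Real.rpow_mul (norm_nonneg z),
      show (2*(m:ℝ)*(1-2/a))*(a/(a-2)) = ((2*m : ℕ):ℝ) by push_cast; field_simp,
      Real.rpow_natCast, abs_pow_eq]
    have harg : 2 * f z + 2 * v z = (2*v z - 2*u z)*(a/(a-2)) := by
      rw [hfdef]
      field_simp
      ring
    rw [harg]
  · -- negativity
    intro z hz
    have hz0 : z ≠ 0 := fun h => hz.2 (by simp [h])
    rw [hKF z hz.1]
    have h1 : 0 < Real.exp (2 * f z + 2 * v z) * (z.re ^ 2 + z.im ^ 2) ^ m :=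
      mul_pos (Real.exp_pos _) (pow_pos (nn_pos hz0) m)
    linarith
  · -- vanishing at the origin
    rw [hKF 0 h0]
    simp [zero_pow hm.ne']
  · -- the limit
    refine ⟨Real.exp (2 * f 0 + 2 * v 0), Real.exp_pos _, ?_⟩
    have hvc : ContinuousAt v 0 := hv.continuousOn.continuousAt (hU.mem_nhds h0)
    have hfc0 : ContinuousAt f 0 := hfc.continuousOn.continuousAt (hU.mem_nhds h0)
    have hcont : ContinuousAt (fun z : ℂ => Real.exp (2 * f z + 2 * v z)) 0 :=
      Real.continuous_exp.continuousAt.comp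
        ((continuousAt_const.mul hfc0).add (continuousAt_const.mul hvc))
    refine (hcont.tendsto.mono_left nhdsWithin_le_nhds).congr' ?_
    filter_upwards [mem_nhdsWithin_of_mem_nhds (hU.mem_nhds h0), self_mem_nhdsWithin]
      with w hwU hw0
    have hw0' : w ≠ 0 := hw0
    rw [hKF w hwU, abs_neg,
      abs_of_pos (mul_pos (Real.exp_pos _) (pow_pos (nn_pos hw0') m)), abs_pow_eq,
      mul_div_assoc, div_self (ne_of_gt (pow_pos (nn_pos hw0') m)), mul_one]
end

section
/- Let Γ = ℤω₁ + ℤω₂ ⊂ ℂ be a lattice (ω₁, ω₂ linearly independent over ℝ), let (a,b,c) ∈ ℝ³, and let f : ℂ → ℝ be a smooth Γ-periodic function such that e^{−2f}|dz|² is a generalized Ricci metric of type (a,b,c) on ℂ. Let D = {sω₁ + tω₂ : s,t ∈ [0,1)} be a fundamental domain of Γ. Then ∫_D ( 2·|∇₀K(z)|² + (aK(z)+b)·(K(z)−c)²·e^{−2f(z)} ) dA(z) = 0, where dA is Lebesgue measure on ℂ ≅ ℝ² (this is the identity 2∫ ‖∇K‖² dμ + ∫ (aK+b)(K−c)² dμ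 = 0 on the torus ℂ/Γ, with μ the area measure of the metric). -/
open Filter Topology

open MeasureTheory Set

/-- Directional derivative of a smooth function is smooth. -/
lemma contDiff_fderiv_apply {g : ℂ → ℝ} (hg : ContDiff ℝ (⊤ : ℕ∞) g) (v : ℂ) :
    ContDiff ℝ (⊤ : ℕ∞) (fun z => fderiv ℝ g z v) :=
  (hg.fderiv_right (by simp)).clm_apply contDiff_const

/-- The derivative of a periodic differentiable function is periodic. -/
lemma fderiv_periodic {g : ℂ → ℝ} (hg : Differentiable ℝ g) {ω : ℂ}
    (hp : ∀ z, g (z + ω) = g z) (z : ℂ) : fderiv ℝ g (z + ω) = fderiv ℝ g z := by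
  have h1 : HasFDerivAt (fun x => g (x + ω)) (fderiv ℝ g (z + ω)) z := by
    have := (hg (z + ω)).hasFDerivAt.comp z ((hasFDerivAt_id z).add_const ω)
    simpa [Function.comp_def] using this
  have h2 : (fun x => g (x + ω)) = g := funext hp
  rw [h2] at h1
  exact h1.fderiv.symm

/-- FTC + periodicity: integral of directional derivative along the period direction on the
unit square vanishes. -/
lemma square_integral_fderiv (ωa ωb : ℂ) {g : ℂ → ℝ} (hg : ContDiff ℝ (⊤ : ℕ∞) g)
    (hp : ∀ z, g (z + ωb) = g z) :
    ∫ p in (Ico (0:ℝ) 1) ×ˢ (Ico (0:ℝ) 1),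
      fderiv ℝ g (p.1 • ωa + p.2 • ωb) ωb = 0 := by
  have hcont : Continuous fun p : ℝ × ℝ => fderiv ℝ g (p.1 • ωa + p.2 • ωb) ωb :=
    ((contDiff_fderiv_apply hg ωb).continuous).comp
      ((continuous_fst.smul continuous_const).add (continuous_snd.smul continuous_const))
  have hint : IntegrableOn (fun p : ℝ × ℝ => fderiv ℝ g (p.1 • ωa + p.2 • ωb) ωb)
      ((Ico (0:ℝ) 1) ×ˢ (Ico (0:ℝ) 1)) := by
    have hc2 : IsCompact ((Icc (0:ℝ) 1) ×ˢ (Icc (0:ℝ) 1)) := isCompact_Icc.prod isCompact_Icc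
    exact (hcont.continuousOn.integrableOn_compact hc2).mono_set
      (Set.prod_mono Ico_subset_Icc_self Ico_subset_Icc_self)
  rw [MeasureTheory.Measure.volume_eq_prod] at hint ⊢
  rw [MeasureTheory.setIntegral_prod _ hint]
  have inner : ∀ x : ℝ, ∫ y in Ico (0:ℝ) 1, fderiv ℝ g (x • ωa + y • ωb) ωb = 0 := by
    intro x
    have hd : ∀ y : ℝ, HasDerivAt (fun y : ℝ => g (x • ωa + y • ωb))
        (fderiv ℝ g (x • ωa + y • ωb) ωb) y := by
      intro y
      have hc : HasDerivAt (fun y : ℝ => x • ωa + y • ωb) ωb y := by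
        simpa using ((hasDerivAt_id y).smul_const ωb).const_add (x • ωa)
      exact ((hg.differentiable (by simp)) _).hasFDerivAt.comp_hasDerivAt y hc
    have hci : Continuous fun y : ℝ => fderiv ℝ g (x • ωa + y • ωb) ωb :=
      ((contDiff_fderiv_apply hg ωb).continuous).comp
        (continuous_const.add (continuous_id.smul continuous_const))
    rw [MeasureTheory.integral_Ico_eq_integral_Ioo, ← MeasureTheory.integral_Ioc_eq_integral_Ioo,
      ← intervalIntegral.integral_of_le zero_le_one]
    rw [intervalIntegral.integral_eq_sub_of_hasDerivAt (fun y _ => hd y)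
      (hci.intervalIntegrable 0 1)]
    simp only [one_smul, zero_smul, add_zero, hp, sub_self]
  rw [MeasureTheory.setIntegral_congr_fun measurableSet_Ico (fun x _ => inner x)]
  simp

/-- Swap the two coordinates in an integral over the unit square. -/
lemma square_integral_swap (F : ℝ → ℝ → ℝ) :
    ∫ p in (Ico (0:ℝ) 1) ×ˢ (Ico (0:ℝ) 1), F p.1 p.2
      = ∫ p in (Ico (0:ℝ) 1) ×ˢ (Ico (0:ℝ) 1), F p.2 p.1 := by
  rw [MeasureTheory.Measure.volume_eq_prod, ← Measure.prod_restrict]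
  exact (MeasureTheory.integral_prod_swap (μ := volume.restrict (Ico (0:ℝ) 1))
    (ν := volume.restrict (Ico (0:ℝ) 1)) (fun z : ℝ × ℝ => F z.1 z.2)).symm

/-- Change of variables: integral over the fundamental domain as an integral over the square. -/
lemma intD_eq (ω₁ ω₂ : ℂ) (hω : LinearIndependent ℝ ![ω₁, ω₂]) (h : ℂ → ℝ) :
    ∃ d : ℝ, ∫ z in Set.image2 (fun s t : ℝ => s • ω₁ + t • ω₂)
        (Ico (0:ℝ) 1) (Ico (0:ℝ) 1), h z
      = ∫ p in (Ico (0:ℝ) 1) ×ˢ (Ico (0:ℝ) 1), d * h (p.1 • ω₁ + p.2 • ω₂) := by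
  classical
  set A : ℂ →L[ℝ] ℂ := Complex.reCLM.smulRight ω₁ + Complex.imCLM.smulRight ω₂ with hAdef
  have hA : ∀ z : ℂ, A z = z.re • ω₁ + z.im • ω₂ := by
    intro z; simp [hAdef, Complex.smul_re]
  have hpair := LinearIndependent.pair_iff.1 hω
  have hinj : Function.Injective A := by
    intro z w hzw
    have h0 : A (z - w) = 0 := by rw [map_sub, hzw, sub_self]
    rw [hA] at h0
    obtain ⟨h1, h2⟩ := hpair _ _ h0
    have hz : z - w = 0 := Complex.ext (by simpa using h1) (by simpa using h2)
    exact sub_eq_zero.1 hz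
  set S : Set ℂ := Complex.measurableEquivRealProd ⁻¹' ((Ico (0:ℝ) 1) ×ˢ (Ico (0:ℝ) 1)) with hSdef
  have hS : MeasurableSet S :=
    Complex.measurableEquivRealProd.measurable (measurableSet_Ico.prod measurableSet_Ico)
  have hDS : Set.image2 (fun s t : ℝ => s • ω₁ + t • ω₂) (Ico (0:ℝ) 1) (Ico (0:ℝ) 1)
      = A '' S := by
    ext w
    simp only [Set.mem_image2, Set.mem_image, hSdef, Set.mem_preimage, Set.mem_prod]
    constructor
    · rintro ⟨s, hs, t, ht, rfl⟩
      refine ⟨⟨s, t⟩, ⟨hs, ht⟩, ?_⟩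
      simp [hA]
    · rintro ⟨z, ⟨h1, h2⟩, rfl⟩
      exact ⟨z.re, h1, z.im, h2, (hA z).symm⟩
  refine ⟨|A.det|, ?_⟩
  rw [hDS, MeasureTheory.integral_image_eq_integral_abs_det_fderiv_smul volume hS
    (fun x _ => A.hasFDerivAt.hasFDerivWithinAt) hinj.injOn h]
  have hfun : (fun x : ℂ => |A.det| • h (A x))
      = fun x : ℂ => |A.det| * h (x.re • ω₁ + x.im • ω₂) := by
    funext z; rw [hA]; rw [smul_eq_mul]
  rw [hfun, hSdef]
  exact (Complex.volume_preserving_equiv_real_prod).setIntegral_preimage_emb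
      Complex.measurableEquivRealProd.measurableEmbedding
      (fun p : ℝ × ℝ => |A.det| * h (p.1 • ω₁ + p.2 • ω₂)) _


/-- Integrability on the unit square from continuity. -/
lemma sq_integrable (F : ℝ × ℝ → ℝ) (hF : Continuous F) :
    IntegrableOn F ((Ico (0:ℝ) 1) ×ˢ (Ico (0:ℝ) 1)) := by
  have hc2 : IsCompact ((Icc (0:ℝ) 1) ×ˢ (Icc (0:ℝ) 1)) := isCompact_Icc.prod isCompact_Icc
  exact (hF.continuousOn.integrableOn_compact hc2).mono_set
    (Set.prod_mono Ico_subset_Icc_self Ico_subset_Icc_self)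

/-- Integrability on the fundamental domain from continuity. -/
lemma D_integrable (ω₁ ω₂ : ℂ) (F : ℂ → ℝ) (hF : Continuous F) :
    IntegrableOn F (Set.image2 (fun s t : ℝ => s • ω₁ + t • ω₂)
      (Ico (0:ℝ) 1) (Ico (0:ℝ) 1)) := by
  have hcpt : IsCompact ((fun p : ℝ × ℝ => p.1 • ω₁ + p.2 • ω₂) ''
      ((Icc (0:ℝ) 1) ×ˢ (Icc (0:ℝ) 1))) :=
    (isCompact_Icc.prod isCompact_Icc).image
      ((continuous_fst.smul continuous_const).add (continuous_snd.smul continuous_const))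
  refine (hF.continuousOn.integrableOn_compact hcpt).mono_set ?_
  rw [← Set.image_prod]
  exact Set.image_mono (Set.prod_mono Ico_subset_Icc_self Ico_subset_Icc_self)

/-- The integral of any directional derivative of a doubly periodic smooth function over the
fundamental domain vanishes. -/
lemma intD_fderiv (ω₁ ω₂ : ℂ) (hω : LinearIndependent ℝ ![ω₁, ω₂]) {g : ℂ → ℝ}
    (hg : ContDiff ℝ (⊤ : ℕ∞) g) (hp₁ : ∀ z, g (z + ω₁) = g z) (hp₂ : ∀ z, g (z + ω₂) = g z)
    (v : ℂ) :
    ∫ z in Set.image2 (fun s t : ℝ => s • ω₁ + t • ω₂) (Ico (0:ℝ) 1) (Ico (0:ℝ) 1),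
      fderiv ℝ g z v = 0 := by
  obtain ⟨d, hd⟩ := intD_eq ω₁ ω₂ hω (fun z => fderiv ℝ g z v)
  rw [hd]
  have hcard : Fintype.card (Fin 2) = Module.finrank ℝ ℂ := by
    simp [Complex.finrank_real_complex]
  set B := basisOfLinearIndependentOfCardEqFinrank hω hcard with hBdef
  have hB : ∀ i, B i = ![ω₁, ω₂] i := fun i => by
    rw [hBdef, coe_basisOfLinearIndependentOfCardEqFinrank]
  set p := B.repr v 0 with hp
  set q := B.repr v 1 with hq
  have hv : v = p • ω₁ + q • ω₂ := by
    conv_lhs => rw [← B.sum_repr v]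
    rw [Fin.sum_univ_two, hB 0, hB 1]
    simp
    rfl
  have hsplit : ∀ z : ℂ, d * fderiv ℝ g z v
      = (d * p) * fderiv ℝ g z ω₁ + (d * q) * fderiv ℝ g z ω₂ := by
    intro z
    conv_lhs => rw [hv]
    rw [map_add, (fderiv ℝ g z).map_smul, (fderiv ℝ g z).map_smul]
    simp only [smul_eq_mul]
    ring
  have hcont1 : Continuous fun pp : ℝ × ℝ => fderiv ℝ g (pp.1 • ω₁ + pp.2 • ω₂) ω₁ :=
    ((contDiff_fderiv_apply hg ω₁).continuous).comp
      ((continuous_fst.smul continuous_const).add (continuous_snd.smul continuous_const))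
  have hcont2 : Continuous fun pp : ℝ × ℝ => fderiv ℝ g (pp.1 • ω₁ + pp.2 • ω₂) ω₂ :=
    ((contDiff_fderiv_apply hg ω₂).continuous).comp
      ((continuous_fst.smul continuous_const).add (continuous_snd.smul continuous_const))
  have e1 : ∫ pp in (Ico (0:ℝ) 1) ×ˢ (Ico (0:ℝ) 1),
      fderiv ℝ g (pp.1 • ω₁ + pp.2 • ω₂) ω₂ = 0 := square_integral_fderiv ω₁ ω₂ hg hp₂
  have e2 : ∫ pp in (Ico (0:ℝ) 1) ×ˢ (Ico (0:ℝ) 1),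
      fderiv ℝ g (pp.1 • ω₁ + pp.2 • ω₂) ω₁ = 0 := by
    rw [square_integral_swap (fun x y => fderiv ℝ g (x • ω₁ + y • ω₂) ω₁)]
    have hcomm : ∀ pp : ℝ × ℝ, fderiv ℝ g (pp.2 • ω₁ + pp.1 • ω₂) ω₁
        = fderiv ℝ g (pp.1 • ω₂ + pp.2 • ω₁) ω₁ := fun pp => by rw [add_comm]
    simp only [hcomm]
    exact square_integral_fderiv ω₂ ω₁ hg hp₁
  calc ∫ pp in (Ico (0:ℝ) 1) ×ˢ (Ico (0:ℝ) 1), d * fderiv ℝ g (pp.1 • ω₁ + pp.2 • ω₂) v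
      = ∫ pp in (Ico (0:ℝ) 1) ×ˢ (Ico (0:ℝ) 1),
          ((d * p) * fderiv ℝ g (pp.1 • ω₁ + pp.2 • ω₂) ω₁
            + (d * q) * fderiv ℝ g (pp.1 • ω₁ + pp.2 • ω₂) ω₂) := by
        simp only [hsplit]
    _ = (d * p) * (∫ pp in (Ico (0:ℝ) 1) ×ˢ (Ico (0:ℝ) 1),
            fderiv ℝ g (pp.1 • ω₁ + pp.2 • ω₂) ω₁)
        + (d * q) * (∫ pp in (Ico (0:ℝ) 1) ×ˢ (Ico (0:ℝ) 1),
            fderiv ℝ g (pp.1 • ω₁ + pp.2 • ω₂) ω₂) := by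
        rw [MeasureTheory.integral_add (sq_integrable
            (fun pp : ℝ × ℝ => (d * p) * fderiv ℝ g (pp.1 • ω₁ + pp.2 • ω₂) ω₁)
            (continuous_const.mul hcont1))
          (sq_integrable
            (fun pp : ℝ × ℝ => (d * q) * fderiv ℝ g (pp.1 • ω₁ + pp.2 • ω₂) ω₂)
            (continuous_const.mul hcont2)),
          MeasureTheory.integral_const_mul, MeasureTheory.integral_const_mul]
    _ = 0 := by rw [e1, e2]; ring

/-- Product rule for directional derivatives of `(c - K)·∂ᵥK`. -/
lemma fderiv_mul_dir (c : ℝ) {K : ℂ → ℝ} (hK : ContDiff ℝ (⊤ : ℕ∞) K) (z v : ℂ) :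
    fderiv ℝ (fun w => (c - K w) * fderiv ℝ K w v) z v
      = (c - K z) * fderiv ℝ (fun w => fderiv ℝ K w v) z v
        - fderiv ℝ K z v * fderiv ℝ K z v := by
  rw [fderiv_fun_mul ((contDiff_const.sub hK).differentiable (by simp) z)
      ((contDiff_fderiv_apply hK v).differentiable (by simp) z)]
  simp only [ContinuousLinearMap.add_apply, ContinuousLinearMap.coe_smul', Pi.smul_apply,
    fderiv_const_sub, ContinuousLinearMap.neg_apply, smul_eq_mul]
  ring

theorem stmt17 (ω₁ ω₂ : ℂ) (hω : LinearIndependent ℝ ![ω₁, ω₂]) (a b c : ℝ)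
    (f : ℂ → ℝ) (hf : ContDiff ℝ (⊤ : ℕ∞) f)
    (hp₁ : ∀ z, f (z + ω₁) = f z) (hp₂ : ∀ z, f (z + ω₂) = f z)
    (hR : IsGenRicci a b c f Set.univ) :
    ∫ z in Set.image2 (fun s t : ℝ => s • ω₁ + t • ω₂)
        (Set.Ico (0 : ℝ) 1) (Set.Ico (0 : ℝ) 1),
      (2 * grad0sq (curv f) z +
        (a * curv f z + b) * (curv f z - c) ^ 2 * Real.exp (-2 * f z)) = 0 := by
  have hlf : ContDiff ℝ (⊤ : ℕ∞) (lap0 f) :=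
    (contDiff_fderiv_apply (contDiff_fderiv_apply hf 1) 1).add
      (contDiff_fderiv_apply (contDiff_fderiv_apply hf Complex.I) Complex.I)
  have hK : ContDiff ℝ (⊤ : ℕ∞) (curv f) :=
    (Real.contDiff_exp.comp (contDiff_const.mul hf)).mul hlf
  -- periodicity of the curvature
  have hper : ∀ ω : ℂ, (∀ z, f (z + ω) = f z) → ∀ z, curv f (z + ω) = curv f z := by
    intro ω hp z
    have hd1 : ∀ z', fderiv ℝ f (z' + ω) = fderiv ℝ f z' :=
      fderiv_periodic (hf.differentiable (by simp)) hp
    have hD1 : ∀ z', (fun w => fderiv ℝ f w 1) (z' + ω) = (fun w => fderiv ℝ f w 1) z' :=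
      fun z' => by simp only [hd1 z']
    have hDI : ∀ z', (fun w => fderiv ℝ f w Complex.I) (z' + ω)
        = (fun w => fderiv ℝ f w Complex.I) z' := fun z' => by simp only [hd1 z']
    have hD1' := fderiv_periodic ((contDiff_fderiv_apply hf 1).differentiable (by simp)) hD1 z
    have hDI' := fderiv_periodic
      ((contDiff_fderiv_apply hf Complex.I).differentiable (by simp)) hDI z
    simp only [curv, lap0, hp z, hD1', hDI']
  have hKp₁ := hper ω₁ hp₁
  have hKp₂ := hper ω₂ hp₂
  -- the two "divergence" pieces
  have hg₁ : ContDiff ℝ (⊤ : ℕ∞) (fun z => (c - curv f z) * fderiv ℝ (curv f) z 1) :=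
    (contDiff_const.sub hK).mul (contDiff_fderiv_apply hK 1)
  have hg₂ : ContDiff ℝ (⊤ : ℕ∞) (fun z => (c - curv f z) * fderiv ℝ (curv f) z Complex.I) :=
    (contDiff_const.sub hK).mul (contDiff_fderiv_apply hK Complex.I)
  have hKper : ∀ ω : ℂ, (∀ z, curv f (z + ω) = curv f z) →
      (∀ z, (fun z => (c - curv f z) * fderiv ℝ (curv f) z 1) (z + ω)
          = (c - curv f z) * fderiv ℝ (curv f) z 1) ∧
      (∀ z, (fun z => (c - curv f z) * fderiv ℝ (curv f) z Complex.I) (z + ω)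
          = (c - curv f z) * fderiv ℝ (curv f) z Complex.I) := by
    intro ω hKp
    have hdK : ∀ z', fderiv ℝ (curv f) (z' + ω) = fderiv ℝ (curv f) z' :=
      fderiv_periodic (hK.differentiable (by simp)) hKp
    exact ⟨fun z => by simp only [hKp z, hdK z], fun z => by simp only [hKp z, hdK z]⟩
  have key₁ := intD_fderiv ω₁ ω₂ hω hg₁ (hKper ω₁ hKp₁).1 (hKper ω₂ hKp₂).1 1
  have key₂ := intD_fderiv ω₁ ω₂ hω hg₂ (hKper ω₁ hKp₁).2 (hKper ω₂ hKp₂).2 Complex.I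
  -- pointwise identity
  have hpoint : ∀ z : ℂ,
      2 * grad0sq (curv f) z + (a * curv f z + b) * (curv f z - c) ^ 2 * Real.exp (-2 * f z)
      = -((fderiv ℝ (fun z => (c - curv f z) * fderiv ℝ (curv f) z 1) z 1)
        + (fderiv ℝ (fun z => (c - curv f z) * fderiv ℝ (curv f) z Complex.I) z Complex.I)) := by
    intro z
    have h := hR z (Set.mem_univ z)
    have hE : Real.exp (2 * f z) ≠ 0 := (Real.exp_pos _).ne'
    rw [fderiv_mul_dir c hK z 1, fderiv_mul_dir c hK z Complex.I]
    rw [show (-2:ℝ) * f z = -(2 * f z) by ring, Real.exp_neg]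
    simp only [lap0, grad0sq] at h ⊢
    field_simp
    nlinarith [h]
  rw [show (fun z => 2 * grad0sq (curv f) z
        + (a * curv f z + b) * (curv f z - c) ^ 2 * Real.exp (-2 * f z))
      = fun z => -((fderiv ℝ (fun z => (c - curv f z) * fderiv ℝ (curv f) z 1) z 1)
        + (fderiv ℝ (fun z => (c - curv f z) * fderiv ℝ (curv f) z Complex.I) z Complex.I))
      from funext hpoint]
  have hi1 : IntegrableOn (fun z =>
      fderiv ℝ (fun z => (c - curv f z) * fderiv ℝ (curv f) z 1) z 1)
      (Set.image2 (fun s t : ℝ => s • ω₁ + t • ω₂) (Ico (0:ℝ) 1) (Ico (0:ℝ) 1)) :=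
    D_integrable ω₁ ω₂ _ (contDiff_fderiv_apply hg₁ 1).continuous
  have hi2 : IntegrableOn (fun z =>
      fderiv ℝ (fun z => (c - curv f z) * fderiv ℝ (curv f) z Complex.I) z Complex.I)
      (Set.image2 (fun s t : ℝ => s • ω₁ + t • ω₂) (Ico (0:ℝ) 1) (Ico (0:ℝ) 1)) :=
    D_integrable ω₁ ω₂ _ (contDiff_fderiv_apply hg₂ Complex.I).continuous
  rw [MeasureTheory.integral_neg, MeasureTheory.integral_add hi1 hi2, key₁, key₂]
  simp
end

section
/- Let Γ = ℤω₁ + ℤω₂ ⊂ ℂ be a lattice (ω₁, ω₂ linearly independent over ℝ), let (a,c) ∈ ℝ², ε ∈ {−1,1}, let f : ℂ → ℝ be smooth and Γ-periodic with curvature K = e^{2f}·Δ₀f, and let h : ℂ → ℂ be an entire function such that e^{−af}·(K − c) = ε·|h|² on ℂ. Then h is constant; moreover h is identically 0 if and only if c = 0. -/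
open Filter Topology

section AuxStmt19
open Filter Topology Set


/-- Second derivative test at a global max, 1-D. -/
lemma aux_real_max (φ : ℝ → ℝ) (hφ : Differentiable ℝ φ) {M : ℝ}
    (hd : HasDerivAt (deriv φ) M 0) (hmax : ∀ t, φ t ≤ φ 0) : M ≤ 0 := by
  by_contra hM
  push_neg at hM
  have h0 : deriv φ 0 = 0 :=
    IsLocalMax.deriv_eq_zero (Filter.Eventually.of_forall hmax)
  have hslope : Tendsto (slope (deriv φ) 0) (𝓝[≠] 0) (𝓝 M) :=
    hasDerivAt_iff_tendsto_slope.mp hd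
  have hev : ∀ᶠ t in 𝓝[≠] (0:ℝ), 0 < slope (deriv φ) 0 t :=
    hslope.eventually (eventually_gt_nhds hM)
  have hev' : ∀ᶠ t in 𝓝[>] (0:ℝ), 0 < slope (deriv φ) 0 t :=
    hev.filter_mono (nhdsWithin_mono 0 (fun t ht => ne_of_gt ht))
  obtain ⟨δ, hδ, hIoo⟩ := (nhdsGT_basis (0:ℝ)).eventually_iff.mp hev'
  have hpos : ∀ t ∈ Ioo (0:ℝ) δ, 0 < deriv φ t := by
    intro t ht
    have := hIoo ht
    rw [slope_def_field, h0] at this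
    have h2 : 0 < (deriv φ t) / t := by simpa using this
    have := mul_pos h2 ht.1
    rwa [div_mul_cancel₀ _ (ne_of_gt ht.1)] at this
  have hmono : StrictMonoOn φ (Icc 0 δ) := by
    apply strictMonoOn_of_deriv_pos (convex_Icc 0 δ) hφ.continuous.continuousOn
    intro x hx
    rw [interior_Icc] at hx
    exact hpos x hx
  have : φ 0 < φ δ :=
    hmono (left_mem_Icc.mpr hδ.le) (right_mem_Icc.mpr hδ.le) hδ
  exact absurd (hmax δ) (not_le.mpr this)



lemma aux_max2 (u : ℂ → ℝ) (hu : ContDiff ℝ (⊤ : ℕ∞) u) (z v : ℂ)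
    (hmax : ∀ w, u w ≤ u z) :
    fderiv ℝ (fun w => fderiv ℝ u w v) z v ≤ 0 := by
  set ψ : ℂ → ℝ := fun w => fderiv ℝ u w v with hψdef
  have hψ : ContDiff ℝ (⊤ : ℕ∞) ψ :=
    (hu.fderiv_right (by simp)).clm_apply contDiff_const
  set L : ℝ → ℂ := fun t => z + t • v with hLdef
  have hL : ∀ t, HasDerivAt L v t := fun t => by
    simpa [hLdef] using ((hasDerivAt_id t).smul_const v).const_add z
  have hL0 : L 0 = z := by simp [hLdef]
  set φ : ℝ → ℝ := fun t => u (L t) with hφdef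
  have hφd : ∀ t, HasDerivAt φ (ψ (L t)) t := fun t =>
    ((hu.differentiable (by simp)) (L t)).hasFDerivAt.comp_hasDerivAt t (hL t)
  have hdφ : deriv φ = fun t => ψ (L t) := funext fun t => (hφd t).deriv
  have hφ'' : HasDerivAt (deriv φ) (fderiv ℝ ψ z v) 0 := by
    rw [hdφ]
    have := ((hψ.differentiable (by simp)) (L 0)).hasFDerivAt.comp_hasDerivAt 0 (hL 0)
    rwa [hL0] at this
  have hφdiff : Differentiable ℝ φ := fun t => (hφd t).differentiableAt
  have hmaxφ : ∀ t, φ t ≤ φ 0 := fun t => by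
    simpa [hφdef, hL0] using hmax (L t)
  exact aux_real_max φ hφdiff hφ'' hmaxφ



lemma aux_lap0_max (u : ℂ → ℝ) (hu : ContDiff ℝ (⊤ : ℕ∞) u) (z : ℂ)
    (hmax : ∀ w, u w ≤ u z) : lap0 u z ≤ 0 := by
  have h1 := aux_max2 u hu z 1 hmax
  have h2 := aux_max2 u hu z Complex.I hmax
  simpa [lap0] using add_nonpos h1 h2

lemma aux_lap0_min (u : ℂ → ℝ) (hu : ContDiff ℝ (⊤ : ℕ∞) u) (z : ℂ)
    (hmin : ∀ w, u z ≤ u w) : 0 ≤ lap0 u z := by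
  have hneg : ContDiff ℝ (⊤ : ℕ∞) (fun w => -u w) := hu.neg
  have h := aux_lap0_max (fun w => -u w) hneg z (fun w => neg_le_neg (hmin w))
  have hrw : ∀ v : ℂ, lap0 (fun w => -u w) z = -lap0 u z := by
    intro v
    have e1 : (fun w => fderiv ℝ (fun x => -u x) w (1:ℂ))
        = fun w => -(fderiv ℝ u w 1) := by
      funext w; rw [fderiv_fun_neg]; simp
    have e2 : (fun w => fderiv ℝ (fun x => -u x) w Complex.I)
        = fun w => -(fderiv ℝ u w Complex.I) := by
      funext w; rw [fderiv_fun_neg]; simp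
    simp only [lap0, e1, e2]
    have e3 : (fun w => -(fderiv ℝ u w (1:ℂ)))
        = fun w => -((fun x => fderiv ℝ u x (1:ℂ)) w) := rfl
    rw [show (fun w => -(fderiv ℝ u w (1:ℂ))) = (fun w => -((fun x => fderiv ℝ u x (1:ℂ)) w)) from rfl]
    rw [show (fun w => -(fderiv ℝ u w Complex.I)) = (fun w => -((fun x => fderiv ℝ u x Complex.I) w)) from rfl]
    rw [fderiv_fun_neg, fderiv_fun_neg]
    simp; ring
  rw [hrw 1] at h
  linarith

/-- fderiv of a periodic function is periodic. -/
lemma aux_fderiv_per {E : Type*} [NormedAddCommGroup E] [NormedSpace ℝ E]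
    (u : ℂ → E) (hu : Differentiable ℝ u) (ω : ℂ) (hp : ∀ z, u (z + ω) = u z) :
    ∀ z, fderiv ℝ u (z + ω) = fderiv ℝ u z := by
  intro z
  have htr : HasFDerivAt (fun w : ℂ => w + ω) (ContinuousLinearMap.id ℝ ℂ) z :=
    (hasFDerivAt_id z).add_const ω
  have hcomp : HasFDerivAt (fun w => u (w + ω))
      ((fderiv ℝ u (z + ω)).comp (ContinuousLinearMap.id ℝ ℂ)) z :=
    (hu (z + ω)).hasFDerivAt.comp z htr
  have : (fun w => u (w + ω)) = u := funext hp
  rw [this] at hcomp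
  rw [hcomp.fderiv, ContinuousLinearMap.comp_id]

lemma aux_curv_per (f : ℂ → ℝ) (hf : ContDiff ℝ (⊤ : ℕ∞) f) (ω : ℂ)
    (hp : ∀ z, f (z + ω) = f z) : ∀ z, curv f (z + ω) = curv f z := by
  have hfd : Differentiable ℝ f := hf.differentiable (by simp)
  have h1 : ∀ z, fderiv ℝ f (z + ω) = fderiv ℝ f z := aux_fderiv_per f hfd ω hp
  intro z
  have hψ : ∀ v : ℂ, ∀ w, fderiv ℝ (fun x => fderiv ℝ f x v) (w + ω)
      = fderiv ℝ (fun x => fderiv ℝ f x v) w := by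
    intro v
    apply aux_fderiv_per _ (((hf.fderiv_right (m := (⊤ : ℕ∞)) (by simp)).clm_apply contDiff_const).differentiable (by simp))
    intro w
    rw [h1 w]
  simp only [curv, lap0, hp z, hψ 1 z, hψ Complex.I z]

lemma aux_curv_cont (f : ℂ → ℝ) (hf : ContDiff ℝ (⊤ : ℕ∞) f) : Continuous (curv f) := by
  have hψ : ∀ v : ℂ, Continuous (fun w => fderiv ℝ (fun x => fderiv ℝ f x v) w v) := by
    intro v
    have h1 : ContDiff ℝ (⊤ : ℕ∞) (fun x => fderiv ℝ f x v) :=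
      (hf.fderiv_right (m := (⊤ : ℕ∞)) (by simp)).clm_apply contDiff_const
    exact ((h1.fderiv_right (m := (⊤ : ℕ∞)) (by simp)).clm_apply contDiff_const).continuous
  have : Continuous (lap0 f) := (hψ 1).add (hψ Complex.I)
  exact ((Real.continuous_exp.comp (continuous_const.mul hf.continuous))).mul this



lemma aux_zper (u : ℂ → ℝ) (ω : ℂ) (hp : ∀ z, u (z + ω) = u z) (n : ℤ) (z : ℂ) :
    u (z + n • ω) = u z := by
  have : Function.Periodic u ω := hp
  exact (this.zsmul n) z

/-- Reduction to fundamental domain: existence point in compact set with same values. -/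
lemma aux_fund (ω₁ ω₂ : ℂ) (hω : LinearIndependent ℝ ![ω₁, ω₂]) :
    ∃ K : Set ℂ, IsCompact K ∧ K.Nonempty ∧
      ∀ z : ℂ, ∃ z' ∈ K, ∃ m n : ℤ, z = z' + m • ω₁ + n • ω₂ := by
  have hcard : Fintype.card (Fin 2) = Module.finrank ℝ ℂ := by
    simp [Complex.finrank_real_complex, Fintype.card_fin]
  let b : Module.Basis (Fin 2) ℝ ℂ := basisOfLinearIndependentOfCardEqFinrank hω hcard
  have hb : ∀ i, b i = ![ω₁, ω₂] i := fun i => by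
    simp [b, coe_basisOfLinearIndependentOfCardEqFinrank]
  refine ⟨(fun p : ℝ × ℝ => p.1 • ω₁ + p.2 • ω₂) '' (Icc 0 1 ×ˢ Icc 0 1),
    ((isCompact_Icc.prod isCompact_Icc).image (by continuity)), ⟨0, ⟨(0,0), by simp, by simp⟩⟩, ?_⟩
  intro z
  have hz : z = b.repr z 0 • ω₁ + b.repr z 1 • ω₂ := by
    have := b.sum_repr z
    rw [Fin.sum_univ_two, hb 0, hb 1] at this
    simpa using this.symm
  set s := b.repr z 0
  set t := b.repr z 1
  refine ⟨Int.fract s • ω₁ + Int.fract t • ω₂, ⟨(Int.fract s, Int.fract t),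
    ⟨⟨(Int.fract_nonneg s), (Int.fract_lt_one s).le⟩,
      ⟨(Int.fract_nonneg t), (Int.fract_lt_one t).le⟩⟩, rfl⟩, ⌊s⌋, ⌊t⌋, ?_⟩
  rw [hz]
  have hs : s = Int.fract s + (⌊s⌋ : ℝ) := by rw [Int.fract]; ring
  have ht : t = Int.fract t + (⌊t⌋ : ℝ) := by rw [Int.fract]; ring
  rw [show s • ω₁ = Int.fract s • ω₁ + (⌊s⌋ : ℝ) • ω₁ by rw [← add_smul, ← hs],
      show t • ω₂ = Int.fract t • ω₂ + (⌊t⌋ : ℝ) • ω₂ by rw [← add_smul, ← ht]]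
  rw [Int.cast_smul_eq_zsmul, Int.cast_smul_eq_zsmul]
  abel



theorem stmt19 (ω₁ ω₂ : ℂ) (hω : LinearIndependent ℝ ![ω₁, ω₂]) (a c ε : ℝ)
    (hε : ε = -1 ∨ ε = 1) (f : ℂ → ℝ) (hf : ContDiff ℝ (⊤ : ℕ∞) f)
    (hp₁ : ∀ z, f (z + ω₁) = f z) (hp₂ : ∀ z, f (z + ω₂) = f z)
    (h : ℂ → ℂ) (hh : Differentiable ℂ h)
    (heq : ∀ z, Real.exp (-a * f z) * (curv f z - c)
      = ε * ‖h z‖ ^ 2) :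
    (∃ w : ℂ, ∀ z, h z = w) ∧ ((∀ z, h z = 0) ↔ c = 0) := by
  obtain ⟨K, hKc, hKne, hKfund⟩ := aux_fund ω₁ ω₂ hω
  have hinv : ∀ u : ℂ → ℝ, (∀ z, u (z + ω₁) = u z) → (∀ z, u (z + ω₂) = u z) →
      ∀ z, ∃ z' ∈ K, u z = u z' := by
    intro u h1 h2 z
    obtain ⟨z', hz', m, n, rfl⟩ := hKfund z
    exact ⟨z', hz', by rw [aux_zper u ω₂ h2 n, aux_zper u ω₁ h1 m]⟩
  have hc₁ := aux_curv_per f hf ω₁ hp₁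
  have hc₂ := aux_curv_per f hf ω₂ hp₂
  set F : ℂ → ℝ := fun z => Real.exp (-a * f z) * (curv f z - c) with hFdef
  have hFcont : Continuous F :=
    ((Real.continuous_exp.comp (continuous_const.mul hf.continuous))).mul
      ((aux_curv_cont f hf).sub continuous_const)
  have hFper₁ : ∀ z, F (z + ω₁) = F z := fun z => by simp [hFdef, hp₁ z, hc₁ z]
  have hFper₂ : ∀ z, F (z + ω₂) = F z := fun z => by simp [hFdef, hp₂ z, hc₂ z]
  obtain ⟨M, hM⟩ := hKc.exists_bound_of_continuousOn hFcont.continuousOn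
  have hFbd : ∀ z, |F z| ≤ M := by
    intro z
    obtain ⟨z', hz', hFz⟩ := hinv F hFper₁ hFper₂ z
    rw [hFz]
    simpa using hM z' hz'
  have heps : ε * ε = 1 := by rcases hε with rfl | rfl <;> norm_num
  have habs : ∀ z, ‖h z‖ ^ 2 = ε * F z := by
    intro z
    have := heq z
    have : ε * F z = ε * (ε * ‖h z‖ ^ 2) := by rw [← this]
    rw [this, ← mul_assoc, heps, one_mul]
  have hbd : Bornology.IsBounded (Set.range h) := by
    rw [isBounded_iff_forall_norm_le]
    refine ⟨Real.sqrt M, ?_⟩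
    rintro x ⟨z, rfl⟩
    have h1 : ‖h z‖ ^ 2 ≤ M := by
      rw [habs z]
      calc ε * F z ≤ |ε * F z| := le_abs_self _
        _ = |ε| * |F z| := abs_mul _ _
        _ ≤ 1 * M := by
            apply mul_le_mul _ (hFbd z) (abs_nonneg _) zero_le_one
            rcases hε with rfl | rfl <;> norm_num
        _ = M := one_mul M
    have : ‖h z‖ = Real.sqrt (‖h z‖ ^ 2) :=
      (Real.sqrt_sq (norm_nonneg _)).symm
    rw [this]
    exact Real.sqrt_le_sqrt h1
  obtain ⟨w, hw⟩ := hh.exists_const_forall_eq_of_bounded hbd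
  refine ⟨⟨w, hw⟩, ?_⟩
  -- global max and min of f
  obtain ⟨z₀, hz₀K, hz₀⟩ := hKc.exists_isMaxOn hKne hf.continuous.continuousOn
  obtain ⟨z₁, hz₁K, hz₁⟩ := hKc.exists_isMinOn hKne hf.continuous.continuousOn
  have hmax : ∀ z, f z ≤ f z₀ := by
    intro z
    obtain ⟨z', hz', hfz⟩ := hinv f hp₁ hp₂ z
    rw [hfz]; exact hz₀ hz'
  have hmin : ∀ z, f z₁ ≤ f z := by
    intro z
    obtain ⟨z', hz', hfz⟩ := hinv f hp₁ hp₂ z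
    rw [hfz]; exact hz₁ hz'
  have hcurv₀ : curv f z₀ ≤ 0 :=
    mul_nonpos_of_nonneg_of_nonpos (Real.exp_pos _).le (aux_lap0_max f hf z₀ hmax)
  have hcurv₁ : 0 ≤ curv f z₁ :=
    mul_nonneg (Real.exp_pos _).le (aux_lap0_min f hf z₁ hmin)
  constructor
  · intro h0
    have hcz : ∀ z, curv f z = c := by
      intro z
      have h2 : Real.exp (-a * f z) * (curv f z - c) = 0 := by
        rw [heq z, h0 z]; simp
      rcases mul_eq_zero.mp h2 with h1 | h1
      · exact absurd h1 (Real.exp_pos _).ne'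
      · linarith
    have h1 : c ≤ 0 := hcz z₀ ▸ hcurv₀
    have h2 : 0 ≤ c := hcz z₁ ▸ hcurv₁
    linarith
  · intro hc0
    subst hc0
    have hz0 : ∃ z, h z = 0 := by
      rcases hε with rfl | rfl
      · -- ε = -1 : use min point z₁
        have := heq z₁
        have hL : 0 ≤ Real.exp (-a * f z₁) * (curv f z₁ - 0) := by
          rw [sub_zero]; exact mul_nonneg (Real.exp_pos _).le hcurv₁
        rw [this] at hL
        have : ‖h z₁‖ ^ 2 ≤ 0 := by nlinarith
        have : ‖h z₁‖ = 0 := by nlinarith [norm_nonneg (h z₁), sq_nonneg (‖h z₁‖)]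
        exact ⟨z₁, by simpa using this⟩
      · -- ε = 1 : use max point z₀
        have := heq z₀
        have hL : Real.exp (-a * f z₀) * (curv f z₀ - 0) ≤ 0 := by
          rw [sub_zero]; exact mul_nonpos_of_nonneg_of_nonpos (Real.exp_pos _).le hcurv₀
        rw [this] at hL
        have : ‖h z₀‖ ^ 2 ≤ 0 := by nlinarith
        have : ‖h z₀‖ = 0 := by nlinarith [norm_nonneg (h z₀)]
        exact ⟨z₀, by simpa using this⟩
    obtain ⟨z', hz'⟩ := hz0
    intro z
    rw [hw z, ← hw z', hz']

end AuxStmt19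
end
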